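/- arXiv:1908.02655 — 4 statements merged into one kernel-verified Lean document; each statement's English description precedes it below -/
import Mathlib

section
/- Conversely, if u: ℝ³ → ℝ³ is a C¹ vector field independent of the second coordinate ȳ satisfying ∇×u = αu with α ≠ 0, and ψ is a stream function with u_1 = -ψ_z, u_3 = ψ_{x̄} on a simply connected planar domain, then u_2 = αψ + β for some constant β, and ψ satisfies ψ_{x̄x̄} + ψ_{zz} + α²ψ + αβ = 0. -/
/-!
The first and third curl equations say that `u₂` and `αψ` have the same partial derivatives,
hence the same Fréchet derivative, so on the connected domain they differ by a constant `β`.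
Substituting `ψ_{x̄} = u₃` and `ψ_z = -u₁` into the Laplacian of `ψ`, the second curl equation
becomes `Δψ = -αu₂ = -α(αψ + β)`.
-/

open Set Filter

section PartialDerivatives

variable {𝕜 E : Type*} [NontriviallyNormedField 𝕜] [NormedAddCommGroup E] [NormedSpace 𝕜 E]
  {f g : 𝕜 × 𝕜 → E} {p : 𝕜 × 𝕜}

theorem DifferentiableAt.deriv_fst_slice (hf : DifferentiableAt 𝕜 f p) :
    deriv (fun x => f (x, p.2)) p.1 = fderiv 𝕜 f p (1, 0) :=
  (hf.hasFDerivAt.comp_hasDerivAt p.1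
    ((hasDerivAt_id p.1).prodMk (hasDerivAt_const p.1 p.2))).deriv

theorem DifferentiableAt.deriv_snd_slice (hf : DifferentiableAt 𝕜 f p) :
    deriv (fun z => f (p.1, z)) p.2 = fderiv 𝕜 f p (0, 1) :=
  (hf.hasFDerivAt.comp_hasDerivAt p.2
    ((hasDerivAt_const p.2 p.1).prodMk (hasDerivAt_id p.2))).deriv

theorem fderiv_eq_of_deriv_slices_eq (hf : DifferentiableAt 𝕜 f p)
    (hg : DifferentiableAt 𝕜 g p)
    (h₁ : deriv (fun x => f (x, p.2)) p.1 = deriv (fun x => g (x, p.2)) p.1)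
    (h₂ : deriv (fun z => f (p.1, z)) p.2 = deriv (fun z => g (p.1, z)) p.2) :
    fderiv 𝕜 f p = fderiv 𝕜 g p := by
  rw [hf.deriv_fst_slice, hg.deriv_fst_slice] at h₁
  rw [hf.deriv_snd_slice, hg.deriv_snd_slice] at h₂
  exact ContinuousLinearMap.prod_ext (ContinuousLinearMap.ext_ring h₁)
    (ContinuousLinearMap.ext_ring h₂)

variable {Ω : Set (𝕜 × 𝕜)}

theorem deriv_fst_slice_congr (hΩ : IsOpen Ω) (hfg : EqOn f g Ω) (hp : p ∈ Ω) :
    deriv (fun x => f (x, p.2)) p.1 = deriv (fun x => g (x, p.2)) p.1 := by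
  refine EventuallyEq.deriv_eq ?_
  have hslice : ContinuousAt (fun x => (x, p.2)) p.1 := by fun_prop
  filter_upwards [hslice.preimage_mem_nhds (hΩ.mem_nhds hp)] with x hx
  exact hfg hx

theorem deriv_snd_slice_congr (hΩ : IsOpen Ω) (hfg : EqOn f g Ω) (hp : p ∈ Ω) :
    deriv (fun z => f (p.1, z)) p.2 = deriv (fun z => g (p.1, z)) p.2 := by
  refine EventuallyEq.deriv_eq ?_
  have hslice : ContinuousAt (fun z => (p.1, z)) p.2 := by fun_prop
  filter_upwards [hslice.preimage_mem_nhds (hΩ.mem_nhds hp)] with z hz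
  exact hfg hz

end PartialDerivatives

theorem beltrami_gives_stream_function_general (α : ℝ)
    (Ω : Set (ℝ × ℝ)) (hΩopen : IsOpen Ω) (hΩconn : IsConnected Ω)
    (u : ℝ × ℝ → ℝ × ℝ × ℝ) (ψ : ℝ × ℝ → ℝ)
    (hu : ContDiffOn ℝ 1 u Ω) (hψ : ContDiffOn ℝ 2 ψ Ω)
    -- stream function relations: ∂_z ψ = -u₁, ∂_{x̄} ψ = u₃
    (hψz : ∀ p ∈ Ω, deriv (fun z => ψ (p.1, z)) p.2 = -(u p).1)
    (hψx : ∀ p ∈ Ω, deriv (fun x => ψ (x, p.2)) p.1 = (u p).2.2)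
    -- curl condition ∇×u = αu for ȳ-independent fields
    (hcurl1 : ∀ p ∈ Ω, -deriv (fun z => (u (p.1, z)).2.1) p.2 = α * (u p).1)
    (hcurl2 : ∀ p ∈ Ω, deriv (fun z => (u (p.1, z)).1) p.2
        - deriv (fun x => (u (x, p.2)).2.2) p.1 = α * (u p).2.1)
    (hcurl3 : ∀ p ∈ Ω, deriv (fun x => (u (x, p.2)).2.1) p.1 = α * (u p).2.2) :
    ∃ β : ℝ, (∀ p ∈ Ω, (u p).2.1 = α * ψ p + β) ∧
      ∀ p ∈ Ω,
        deriv (fun x' => deriv (fun x'' => ψ (x'', p.2)) x') p.1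
          + deriv (fun z' => deriv (fun z'' => ψ (p.1, z'')) z') p.2
          + α ^ 2 * ψ p + α * β = 0 := by
  have hu₂ : DifferentiableOn ℝ (fun p => (u p).2.1) Ω :=
    (hu.differentiableOn one_ne_zero).snd.fst
  have hαψ : DifferentiableOn ℝ (fun p => α * ψ p) Ω :=
    (hψ.differentiableOn two_ne_zero).const_mul α
  obtain ⟨β, hβ⟩ := hΩopen.exists_eq_add_of_fderiv_eq hΩconn.isPreconnected hu₂ hαψ
    fun p hp => fderiv_eq_of_deriv_slices_eq (hu₂.differentiableAt (hΩopen.mem_nhds hp))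
      (hαψ.differentiableAt (hΩopen.mem_nhds hp))
      (by rw [hcurl3 p hp, deriv_const_mul_field, hψx p hp])
      (by rw [deriv_const_mul_field, hψz p hp]; linarith [hcurl1 p hp])
  refine ⟨β, hβ, fun p hp => ?_⟩
  have hψxx := deriv_fst_slice_congr hΩopen (fun q hq => hψx q hq) hp
  have hψzz := deriv_snd_slice_congr hΩopen (fun q hq => hψz q hq) hp
  rw [deriv.fun_neg] at hψzz
  linear_combination hψxx + hψzz - hcurl2 p hp - α * hβ hp

/-- Conversely, a `ȳ`-independent Beltrami field with `α ≠ 0` and stream function `ψ`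
(`u₁ = -ψ_z`, `u₃ = ψ_{x̄}`) on a connected planar domain satisfies `u₂ = αψ + β` for a
constant `β`, and `ψ_{x̄x̄} + ψ_{zz} + α²ψ + αβ = 0`. -/
theorem beltrami_gives_stream_function (α : ℝ) (hα : α ≠ 0)
    (Ω : Set (ℝ × ℝ)) (hΩopen : IsOpen Ω) (hΩconn : IsConnected Ω)
    (u : ℝ × ℝ → ℝ × ℝ × ℝ) (ψ : ℝ × ℝ → ℝ)
    (hu : ContDiffOn ℝ 1 u Ω) (hψ : ContDiffOn ℝ 2 ψ Ω)
    -- stream function relations: ∂_z ψ = -u₁, ∂_{x̄} ψ = u₃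
    (hψz : ∀ p ∈ Ω, deriv (fun z => ψ (p.1, z)) p.2 = -(u p).1)
    (hψx : ∀ p ∈ Ω, deriv (fun x => ψ (x, p.2)) p.1 = (u p).2.2)
    -- curl condition ∇×u = αu for ȳ-independent fields
    (hcurl1 : ∀ p ∈ Ω, -deriv (fun z => (u (p.1, z)).2.1) p.2 = α * (u p).1)
    (hcurl2 : ∀ p ∈ Ω, deriv (fun z => (u (p.1, z)).1) p.2
        - deriv (fun x => (u (x, p.2)).2.2) p.1 = α * (u p).2.1)
    (hcurl3 : ∀ p ∈ Ω, deriv (fun x => (u (x, p.2)).2.1) p.1 = α * (u p).2.2) :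
    ∃ β : ℝ, (∀ p ∈ Ω, (u p).2.1 = α * ψ p + β) ∧
      ∀ p ∈ Ω,
        deriv (fun x' => deriv (fun x'' => ψ (x'', p.2)) x') p.1
          + deriv (fun z' => deriv (fun z'' => ψ (p.1, z'')) z') p.2
          + α ^ 2 * ψ p + α * β = 0 :=
  beltrami_gives_stream_function_general α Ω hΩopen hΩconn u ψ hu hψ hψz hψx hcurl1 hcurl2 hcurl3
end

section
/- In the symmetric lattice case with generators k₁ = k(cos ω, sin ω), k₂ = k(cos ω, -sin ω), ω ∈ (0, π/2), if c* = c(cos φ, sin φ) with c ≠ 0 satisfies both dispersion equations ρ(c*, k₁) = 0 and ρ(c*, k₂) = 0 (with common κ = κ(k) and a = g + σk² > 0), then 2κ cos φ sin φ + α(cos²φ - sin²φ) = 0; in particular if additionally cos(2φ) ≠ 0 then tan(2φ) = -α/κ. -/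
/-!
Subtracting the two dispersion equations cancels `g + σk²` and leaves
`c² · 2 cos ω sin ω · (2κ cos φ sin φ + α (cos² φ - sin² φ)) = 0`; the prefactor vanishes for no
`ω ∈ (0, π/2)`. In double-angle form the relation reads `κ sin 2φ + α cos 2φ = 0`, which gives the
tangent once `κ ≠ 0`; and `κ = 0` together with `cos 2φ ≠ 0` forces `α = 0`, which makes the left
side of the dispersion equations vanish although `g + σk² > 0`.
-/

open Real

lemma dispersion_sub_reflect {R : Type*} [CommRing R] (κ α a b x y : R) :
    (κ * (a * x + b * y) ^ 2 - α * (a * x + b * y) * (a * y - b * x))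
      - (κ * (a * x - b * y) ^ 2 - α * (a * x - b * y) * (a * y + b * x))
      = 2 * a * b * (2 * κ * x * y + α * (x ^ 2 - y ^ 2)) := by
  ring

lemma angle_relation_of_dispersion_eq {K : Type*} [Field K] [CharZero K]
    {κ α a b x y c : K} (ha : a ≠ 0) (hb : b ≠ 0) (hc : c ≠ 0)
    (h : c ^ 2 * (κ * (a * x + b * y) ^ 2 - α * (a * x + b * y) * (a * y - b * x))
      = c ^ 2 * (κ * (a * x - b * y) ^ 2 - α * (a * x - b * y) * (a * y + b * x))) :
    2 * κ * x * y + α * (x ^ 2 - y ^ 2) = 0 := by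
  have hprod : (c ^ 2 * (2 * a * b)) * (2 * κ * x * y + α * (x ^ 2 - y ^ 2)) = 0 := by
    rw [mul_assoc, ← dispersion_sub_reflect, mul_sub, h, sub_self]
  exact (mul_eq_zero.mp hprod).resolve_left (by simp [ha, hb, hc])

lemma tan_two_mul_eq_neg_div {κ α φ : ℝ} (h : 2 * κ * cos φ * sin φ + α * (cos φ ^ 2 - sin φ ^ 2) = 0)
    (hcos : cos (2 * φ) ≠ 0) (hκ : κ ≠ 0) :
    tan (2 * φ) = -α / κ := by
  rw [tan_eq_sin_div_cos, div_eq_div_iff hcos hκ, sin_two_mul, cos_two_mul']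
  linear_combination h

open Real in
theorem symmetric_lattice_angle_general (k ω α κ g σ c φ : ℝ)
    (hω : ω ∈ Set.Ioo 0 (π / 2)) (hc : c ≠ 0) (hg : 0 < g) (hσ : 0 < σ)
    (heq1 : c ^ 2 * (κ * (cos ω * cos φ + sin ω * sin φ) ^ 2
      - α * (cos ω * cos φ + sin ω * sin φ) * (cos ω * sin φ - sin ω * cos φ))
      = g + σ * k ^ 2)
    (heq2 : c ^ 2 * (κ * (cos ω * cos φ - sin ω * sin φ) ^ 2
      - α * (cos ω * cos φ - sin ω * sin φ) * (cos ω * sin φ + sin ω * cos φ))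
      = g + σ * k ^ 2) :
    2 * κ * cos φ * sin φ + α * (cos φ ^ 2 - sin φ ^ 2) = 0 ∧
    (cos (2 * φ) ≠ 0 → tan (2 * φ) = -α / κ) := by
  have hcos_ω : cos ω ≠ 0 := (cos_pos_of_mem_Ioo ⟨by linarith [pi_pos, hω.1], hω.2⟩).ne'
  have hsin_ω : sin ω ≠ 0 := (sin_pos_of_pos_of_lt_pi hω.1 (by linarith [pi_pos, hω.2])).ne'
  have hrel := angle_relation_of_dispersion_eq hcos_ω hsin_ω hc (heq1.trans heq2.symm)
  refine ⟨hrel, fun hcos => tan_two_mul_eq_neg_div hrel hcos ?_⟩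
  rintro rfl
  have hα : α * cos (2 * φ) = 0 := by
    rw [cos_two_mul']
    linear_combination hrel
  obtain rfl : α = 0 := (mul_eq_zero.mp hα).resolve_right hcos
  have : 0 < g + σ * k ^ 2 := by positivity
  simp only [zero_mul, sub_zero, mul_zero] at heq1
  linarith

open Real in
/-- Symmetric lattice case: if `c* = c(cos φ, sin φ)` with `c ≠ 0` satisfies both dispersion
equations for `k₁ = k(cos ω, sin ω)` and `k₂ = k(cos ω, -sin ω)`, `ω ∈ (0, π/2)`, then
`2κ cos φ sin φ + α(cos²φ - sin²φ) = 0`; if moreover `cos(2φ) ≠ 0` then `tan(2φ) = -α/κ`. -/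
theorem symmetric_lattice_angle (k ω α κ g σ c φ : ℝ)
    (hk : 0 < k) (hω : ω ∈ Set.Ioo 0 (π / 2)) (hc : c ≠ 0) (hg : 0 < g) (hσ : 0 < σ)
    (heq1 : c ^ 2 * (κ * (cos ω * cos φ + sin ω * sin φ) ^ 2
      - α * (cos ω * cos φ + sin ω * sin φ) * (cos ω * sin φ - sin ω * cos φ))
      = g + σ * k ^ 2)
    (heq2 : c ^ 2 * (κ * (cos ω * cos φ - sin ω * sin φ) ^ 2
      - α * (cos ω * cos φ - sin ω * sin φ) * (cos ω * sin φ + sin ω * cos φ))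
      = g + σ * k ^ 2) :
    2 * κ * cos φ * sin φ + α * (cos φ ^ 2 - sin φ ^ 2) = 0 ∧
    (cos (2 * φ) ≠ 0 → tan (2 * φ) = -α / κ) :=
  symmetric_lattice_angle_general k ω α κ g σ c φ hω hc hg hσ heq1 heq2
end

section
/- If ω ∈ (0, π/2), n₁, n₂ ∈ ℤ and q_{n₁n₂} = 1, then (n₁, n₂) ∈ {(±1, 0), (0, ±1)} or n₁ = ±n₂ with 4n₁²cos²ω = 1 (when n₁ = n₂) or 4n₁²sin²ω = 1 (when n₁ = -n₂). -/
/-!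
Write `q² = (n₁ + n₂)² cos² ω + (n₁ - n₂)² sin² ω` and use `cos² ω + sin² ω = 1`.
Both weights are strictly positive, so if neither integer square vanishes, both are `≥ 1`
and `q² = 1` forces both to equal `1`; this gives `(±1, 0), (0, ±1)`. If one of them
vanishes, `n₁ = ±n₂` and the remaining term reads `4n₁² cos² ω = 1` or `4n₁² sin² ω = 1`.
-/

theorem Int.eq_zero_or_eq_zero_or_sq_eq_one_of_sq_mul_add_sq_mul_eq_one {K : Type*} [CommRing K]
    [LinearOrder K] [IsStrictOrderedRing K] {x y : K} (hx : 0 < x) (hy : 0 < y) (hxy : x + y = 1)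
    {m k : ℤ} (h : (m : K) ^ 2 * x + (k : K) ^ 2 * y = 1) :
    m = 0 ∨ k = 0 ∨ (m ^ 2 = 1 ∧ k ^ 2 = 1) := by
  refine or_iff_not_imp_left.2 fun hm => or_iff_not_imp_left.2 fun hk => ?_
  have one_le_sq {n : ℤ} (hn : n ≠ 0) : (1 : K) ≤ (n : K) ^ 2 := by
    exact_mod_cast (one_le_sq_iff_one_le_abs n).2 (Int.one_le_abs hn)
  have hsum : ((m : K) ^ 2 - 1) * x + ((k : K) ^ 2 - 1) * y = 0 := by
    linear_combination h - hxy
  obtain ⟨hmx, hky⟩ := (add_eq_zero_iff_of_nonneg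
    (mul_nonneg (sub_nonneg.2 (one_le_sq hm)) hx.le)
    (mul_nonneg (sub_nonneg.2 (one_le_sq hk)) hy.le)).1 hsum
  have hm1 : (m : K) ^ 2 = 1 := sub_eq_zero.1 ((mul_eq_zero.1 hmx).resolve_right hx.ne')
  have hk1 : (k : K) ^ 2 = 1 := sub_eq_zero.1 ((mul_eq_zero.1 hky).resolve_right hy.ne')
  exact ⟨by exact_mod_cast hm1, by exact_mod_cast hk1⟩

theorem Int.eq_unit_vector_of_sq_add_eq_one_of_sq_sub_eq_one {a b : ℤ} (hadd : (a + b) ^ 2 = 1)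
    (hsub : (a - b) ^ 2 = 1) :
    (a, b) = (1, 0) ∨ (a, b) = (-1, 0) ∨ (a, b) = (0, 1) ∨ (a, b) = (0, -1) := by
  rw [sq_eq_one_iff] at hadd hsub
  simp only [Prod.ext_iff]
  omega

open Real in
/-- If `ω ∈ (0, π/2)` and `q_{n₁n₂} = 1`, then `(n₁, n₂) ∈ {(±1,0), (0,±1)}`, or `n₁ = n₂`
with `4n₁²cos²ω = 1`, or `n₁ = -n₂` with `4n₁²sin²ω = 1`. -/
theorem lattice_length_one_classification (ω : ℝ) (hω : ω ∈ Set.Ioo 0 (π / 2))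
    (n₁ n₂ : ℤ)
    (hq : ((n₁ + n₂ : ℝ)) ^ 2 * cos ω ^ 2 + ((n₁ - n₂ : ℝ)) ^ 2 * sin ω ^ 2 = 1) :
    ((n₁, n₂) = (1, 0) ∨ (n₁, n₂) = (-1, 0) ∨ (n₁, n₂) = (0, 1) ∨ (n₁, n₂) = (0, -1)) ∨
    (n₁ = n₂ ∧ 4 * (n₁ : ℝ) ^ 2 * cos ω ^ 2 = 1) ∨
    (n₁ = -n₂ ∧ 4 * (n₁ : ℝ) ^ 2 * sin ω ^ 2 = 1) := by
  obtain ⟨hω₀, hω₁⟩ := hω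
  have hsin : 0 < sin ω ^ 2 := pow_pos (sin_pos_of_pos_of_lt_pi hω₀ (by linarith [pi_pos])) 2
  have hcos : 0 < cos ω ^ 2 := pow_pos (cos_pos_of_mem_Ioo ⟨by linarith [pi_pos], hω₁⟩) 2
  have hq' : ((n₁ + n₂ : ℤ) : ℝ) ^ 2 * cos ω ^ 2 + ((n₁ - n₂ : ℤ) : ℝ) ^ 2 * sin ω ^ 2 = 1 := by
    push_cast
    exact hq
  rcases Int.eq_zero_or_eq_zero_or_sq_eq_one_of_sq_mul_add_sq_mul_eq_one hcos hsin
    (cos_sq_add_sin_sq ω) hq' with hadd | hsub | ⟨hadd, hsub⟩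
  · obtain rfl : n₁ = -n₂ := by omega
    refine Or.inr (Or.inr ⟨rfl, ?_⟩)
    push_cast at hq ⊢
    linear_combination hq
  · obtain rfl : n₁ = n₂ := by omega
    refine Or.inr (Or.inl ⟨rfl, ?_⟩)
    linear_combination hq
  · exact Or.inl (Int.eq_unit_vector_of_sq_add_eq_one_of_sq_sub_eq_one hadd hsub)
end

section
/- Transversality from non-nested asymptote sets: let A₁, A₂ be real symmetric 2×2 matrices and c* ∈ ℝ² with (c*)ᵀA₁c* = (c*)ᵀA₂c* = 1. If the gradients A₁c* and A₂c* are parallel, then (A₁ - A₂)c* = 0 and A₁ - A₂ is positive or negative semidefinite; consequently one of the sets {c : cᵀAᵢc > 0} is contained in the other. -/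
/-!
Comparing `c ⬝ᵥ A₁c = l • (c ⬝ᵥ A₂c)` with the common value `1` forces `l = 1`, so `c` lies in
the kernel of the symmetric matrix `D = A₁ - A₂`, whence `det D = 0`. For a binary form
`a x² + 2b xy + d y²` with `ad = b²` one has
`(a + d) · (a x² + 2b xy + d y²) = (a x + b y)² + (b x + d y)²`,
so the form has the sign of the trace. A semidefinite difference of two quadratic forms nests
their positivity sets.
-/

open Matrix

theorem binaryForm_nonneg_of_mul_eq_sq {a b d : ℝ} (hdet : a * d = b ^ 2) (htr : 0 ≤ a + d)
    (x y : ℝ) : 0 ≤ a * x ^ 2 + 2 * b * x * y + d * y ^ 2 := by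
  have hsos : (a + d) * (a * x ^ 2 + 2 * b * x * y + d * y ^ 2) =
      (a * x + b * y) ^ 2 + (b * x + d * y) ^ 2 := by
    linear_combination (x ^ 2 + y ^ 2) * hdet
  rcases htr.lt_or_eq with htr | htr
  · exact nonneg_of_mul_nonneg_right (hsos ▸ by positivity) htr
  · have ha : a = 0 := by nlinarith [sq_nonneg b]
    have hb : b = 0 := by nlinarith [sq_nonneg b]
    have hd : d = 0 := by linarith
    simp [ha, hb, hd]

theorem dotProduct_mulVec_fin_two {M : Matrix (Fin 2) (Fin 2) ℝ} (hM : M.IsSymm)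
    (v : Fin 2 → ℝ) :
    v ⬝ᵥ (M *ᵥ v) = M 0 0 * v 0 ^ 2 + 2 * M 0 1 * v 0 * v 1 + M 1 1 * v 1 ^ 2 := by
  simp only [dotProduct, mulVec, Fin.sum_univ_two, hM.apply 0 1]
  ring

theorem Matrix.IsSymm.nonneg_of_det_eq_zero_of_trace_nonneg {M : Matrix (Fin 2) (Fin 2) ℝ}
    (hM : M.IsSymm) (hdet : M.det = 0) (htr : 0 ≤ M.trace) (v : Fin 2 → ℝ) :
    0 ≤ v ⬝ᵥ (M *ᵥ v) := by
  rw [dotProduct_mulVec_fin_two hM]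
  refine binaryForm_nonneg_of_mul_eq_sq ?_ (by simpa [trace_fin_two] using htr) _ _
  rw [det_fin_two, hM.apply 0 1] at hdet
  linear_combination hdet

theorem Matrix.IsSymm.semidef_of_det_eq_zero {M : Matrix (Fin 2) (Fin 2) ℝ} (hM : M.IsSymm)
    (hdet : M.det = 0) :
    (∀ v : Fin 2 → ℝ, 0 ≤ v ⬝ᵥ (M *ᵥ v)) ∨ (∀ v : Fin 2 → ℝ, v ⬝ᵥ (M *ᵥ v) ≤ 0) := by
  rcases le_total 0 M.trace with htr | htr
  · exact .inl (hM.nonneg_of_det_eq_zero_of_trace_nonneg hdet htr)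
  · refine .inr fun v => ?_
    have hneg := hM.neg.nonneg_of_det_eq_zero_of_trace_nonneg
      (by simp [det_neg, hdet]) (by simpa [trace_neg] using htr) v
    rwa [neg_mulVec, dotProduct_neg, neg_nonneg] at hneg

theorem sub_mulVec_eq_zero_of_parallel {n R : Type*} [Fintype n] [Field R]
    {A₁ A₂ : Matrix n n R} {c : n → R} (hq : c ⬝ᵥ (A₁ *ᵥ c) = c ⬝ᵥ (A₂ *ᵥ c))
    (hq₂ : c ⬝ᵥ (A₂ *ᵥ c) ≠ 0) (hpar : (∃ l : R, A₁ *ᵥ c = l • (A₂ *ᵥ c)) ∨ A₂ *ᵥ c = 0) :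
    (A₁ - A₂) *ᵥ c = 0 := by
  rcases hpar with ⟨l, hl⟩ | h0
  · have hl1 : l = 1 := by
      rw [hl, dotProduct_smul, smul_eq_mul] at hq
      exact (mul_eq_right₀ hq₂).mp hq
    rw [sub_mulVec, hl, hl1, one_smul, sub_self]
  · exact absurd (by rw [h0, dotProduct_zero]) hq₂

theorem setOf_dotProduct_mulVec_pos_subset {n R : Type*} [Fintype n]
    [CommRing R] [PartialOrder R] [IsOrderedRing R] {A₁ A₂ : Matrix n n R}
    (h : ∀ v : n → R, 0 ≤ v ⬝ᵥ ((A₁ - A₂) *ᵥ v)) :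
    {v : n → R | 0 < v ⬝ᵥ (A₂ *ᵥ v)} ⊆ {v : n → R | 0 < v ⬝ᵥ (A₁ *ᵥ v)} := fun v hv => by
  have hv' := h v
  rw [sub_mulVec, dotProduct_sub, sub_nonneg] at hv'
  exact lt_of_lt_of_le hv hv'

open Matrix in
theorem tangential_intersection_nesting_general (A₁ A₂ : Matrix (Fin 2) (Fin 2) ℝ)
    (h₁ : A₁.IsSymm) (h₂ : A₂.IsSymm) (c : Fin 2 → ℝ)
    (hq₁ : c ⬝ᵥ (A₁ *ᵥ c) = 1) (hq₂ : c ⬝ᵥ (A₂ *ᵥ c) = 1)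
    (hpar : (∃ l : ℝ, A₁ *ᵥ c = l • (A₂ *ᵥ c)) ∨ A₂ *ᵥ c = 0) :
    (A₁ - A₂) *ᵥ c = 0 ∧
    ((∀ v : Fin 2 → ℝ, 0 ≤ v ⬝ᵥ ((A₁ - A₂) *ᵥ v)) ∨
      (∀ v : Fin 2 → ℝ, v ⬝ᵥ ((A₁ - A₂) *ᵥ v) ≤ 0)) ∧
    (({v : Fin 2 → ℝ | 0 < v ⬝ᵥ (A₂ *ᵥ v)} ⊆ {v : Fin 2 → ℝ | 0 < v ⬝ᵥ (A₁ *ᵥ v)}) ∨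
      ({v : Fin 2 → ℝ | 0 < v ⬝ᵥ (A₁ *ᵥ v)} ⊆ {v : Fin 2 → ℝ | 0 < v ⬝ᵥ (A₂ *ᵥ v)})) := by
  have hker : (A₁ - A₂) *ᵥ c = 0 :=
    sub_mulVec_eq_zero_of_parallel (hq₁.trans hq₂.symm) (by rw [hq₂]; exact one_ne_zero) hpar
  have hc : c ≠ 0 := by
    rintro rfl
    simp at hq₁
  have hdet : (A₁ - A₂).det = 0 := exists_mulVec_eq_zero_iff.mp ⟨c, hc, hker⟩
  have hsemi := (h₁.sub h₂).semidef_of_det_eq_zero hdet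
  refine ⟨hker, hsemi, hsemi.imp setOf_dotProduct_mulVec_pos_subset fun hneg => ?_⟩
  refine setOf_dotProduct_mulVec_pos_subset fun v => ?_
  rw [← neg_sub, neg_mulVec, dotProduct_neg, neg_nonneg]
  exact hneg v

open Matrix in
/-- If the gradients `A₁c*` and `A₂c*` of two quadratic forms with common value `1` at
`c* ≠ 0` are parallel, then `(A₁ - A₂)c* = 0`, `A₁ - A₂` is positive or negative
semidefinite, and one of the sets `{c : cᵀAᵢc > 0}` is contained in the other. -/
theorem tangential_intersection_nesting (A₁ A₂ : Matrix (Fin 2) (Fin 2) ℝ)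
    (h₁ : A₁.IsSymm) (h₂ : A₂.IsSymm) (c : Fin 2 → ℝ) (hc : c ≠ 0)
    (hq₁ : c ⬝ᵥ (A₁ *ᵥ c) = 1) (hq₂ : c ⬝ᵥ (A₂ *ᵥ c) = 1)
    (hpar : (∃ l : ℝ, A₁ *ᵥ c = l • (A₂ *ᵥ c)) ∨ A₂ *ᵥ c = 0) :
    (A₁ - A₂) *ᵥ c = 0 ∧
    ((∀ v : Fin 2 → ℝ, 0 ≤ v ⬝ᵥ ((A₁ - A₂) *ᵥ v)) ∨
      (∀ v : Fin 2 → ℝ, v ⬝ᵥ ((A₁ - A₂) *ᵥ v) ≤ 0)) ∧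
    (({v : Fin 2 → ℝ | 0 < v ⬝ᵥ (A₂ *ᵥ v)} ⊆ {v : Fin 2 → ℝ | 0 < v ⬝ᵥ (A₁ *ᵥ v)}) ∨
      ({v : Fin 2 → ℝ | 0 < v ⬝ᵥ (A₁ *ᵥ v)} ⊆ {v : Fin 2 → ℝ | 0 < v ⬝ᵥ (A₂ *ᵥ v)})) :=
  tangential_intersection_nesting_general A₁ A₂ h₁ h₂ c hq₁ hq₂ hpar
end
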